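/- With zero linking cost, the expected retailer payoff in the cone network exceeds that in the parallel network if and only if γ ≤ (2/3)(1−λ)²(1+λ); precisely, λ(λ³ − 2λ² + 1 − (7/2)γ)D² − λ(−λ³ + 2λ − 1 − (1/2)γ)D² = λD²(2(1−λ)²(1+λ) − 3γ), which is nonnegative iff γ ≤ (2/3)(1−λ)²(1+λ). -/
import Mathlib


theorem stmt_10 (l D γ : ℝ) (hl : l ∈ Set.Ioo (0:ℝ) 1) (hD : 0 < D)
    (hγ : 0 ≤ γ) :
    l*(l^3 - 2*l^2 + 1 - (7/2)*γ)*D^2 - l*(-l^3 + 2*l - 1 - (1/2)*γ)*D^2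
      = l*D^2*(2*(1-l)^2*(1+l) - 3*γ) ∧
    (0 ≤ l*(l^3 - 2*l^2 + 1 - (7/2)*γ)*D^2 - l*(-l^3 + 2*l - 1 - (1/2)*γ)*D^2
      ↔ γ ≤ (2/3)*(1-l)^2*(1+l)) := by
  obtain ⟨hl0, hl1⟩ := hl
  have heq : l*(l^3 - 2*l^2 + 1 - (7/2)*γ)*D^2 - l*(-l^3 + 2*l - 1 - (1/2)*γ)*D^2
      = l*D^2*(2*(1-l)^2*(1+l) - 3*γ) := by ring
  refine ⟨heq, ?_⟩
  rw [heq]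
  have hpos : 0 < l * D^2 := by positivity
  rw [mul_nonneg_iff_of_pos_left hpos, sub_nonneg]
  constructor <;> intro h <;> nlinarith
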